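/- arXiv:2004.07587 — 2 statements merged into one kernel-verified Lean document; each statement's English description precedes it below -/
import Mathlib

section
/- Let p be a prime and 0 ≤ n ≤ p-1. Then the n-th symmetric power Sym^n F̄_p^2 of the standard representation of GL_2(F_p) is an irreducible F̄_p-representation of GL_2(F_p). -/
open MvPolynomial

/-- The algebraic closure of `𝔽_p`. -/
abbrev F (p : ℕ) [Fact p.Prime] : Type := AlgebraicClosure (ZMod p)

/-- The group `GL₂(𝔽_p)`. -/
abbrev GL2 (p : ℕ) := GL (Fin 2) (ZMod p)

variable (p : ℕ) [Fact p.Prime]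

/-- The algebra endomorphism of `F̄_p[X₀,X₁]` induced by `g ∈ GL₂(𝔽_p)` acting on the
variables via the standard representation. -/
noncomputable def matAct (g : GL2 p) :
    MvPolynomial (Fin 2) (F p) →ₐ[F p] MvPolynomial (Fin 2) (F p) :=
  aeval fun i => ∑ j, algebraMap (ZMod p) (F p) (g.val j i) • X j

theorem matAct_one : matAct p 1 = AlgHom.id (F p) _ := by
  apply MvPolynomial.algHom_ext
  intro i
  simp [matAct, Matrix.one_apply]

theorem matAct_mul (g h : GL2 p) : matAct p (g * h) = (matAct p g).comp (matAct p h) := by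
  apply MvPolynomial.algHom_ext
  intro i
  simp only [matAct, AlgHom.comp_apply, aeval_X, map_sum, map_smul,
    Matrix.GeneralLinearGroup.coe_mul, Matrix.mul_apply]
  simp [Finset.smul_sum, smul_smul, map_sum, map_mul,
    Finset.sum_comm (s := (Finset.univ : Finset (Fin 2))), mul_comm,
    add_smul, Finset.sum_add_distrib, add_comm]
  simp only [← map_mul, algebraMap_smul]
  abel

/-- The action of `GL₂(𝔽_p)` on polynomials in two variables. -/
noncomputable def polyRep : Representation (F p) (GL2 p) (MvPolynomial (Fin 2) (F p)) where
  toFun g := (matAct p g).toLinearMap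
  map_one' := by
    apply LinearMap.ext; intro x
    change matAct p 1 x = x
    rw [matAct_one]; rfl
  map_mul' g h := by
    apply LinearMap.ext; intro x
    simp [matAct_mul]

/-- The space of homogeneous polynomials of degree `n` in two variables: the underlying
space of `Sym^n F̄_p²`. -/
noncomputable abbrev SymSpace (n : ℕ) : Submodule (F p) (MvPolynomial (Fin 2) (F p)) :=
  homogeneousSubmodule (Fin 2) (F p) n

theorem symSpace_invariant (g : GL2 p) (n : ℕ) :
    ∀ x ∈ SymSpace p n, polyRep p g x ∈ SymSpace p n := by
  intro x hx
  rw [mem_homogeneousSubmodule] at hx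
  have h1 : ∀ i, (∑ j, algebraMap (ZMod p) (F p) (g.val j i) •
      (X j : MvPolynomial (Fin 2) (F p))).IsHomogeneous 1 := by
    intro i
    apply IsHomogeneous.sum
    intro j _
    rw [MvPolynomial.smul_eq_C_mul]
    exact (isHomogeneous_X _ _).C_mul _
  have h2 := hx.aeval (fun i => ∑ j, algebraMap (ZMod p) (F p) (g.val j i) • X j)
    (fun i => h1 i)
  rw [one_mul] at h2
  exact (mem_homogeneousSubmodule _ _).mpr h2

/-- `Sym^n F̄_p²`, the `n`-th symmetric power of the standard representation of `GL₂(𝔽_p)`,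
realised on homogeneous polynomials of degree `n`. -/
noncomputable def symRep (n : ℕ) : Representation (F p) (GL2 p) (SymSpace p n) where
  toFun g := (polyRep p g).restrict (symSpace_invariant p g n)
  map_one' := by
    apply LinearMap.ext; intro x; apply Subtype.ext
    simp [LinearMap.restrict_apply]
  map_mul' g h := by
    apply LinearMap.ext; intro x; apply Subtype.ext
    simp [LinearMap.restrict_apply, map_mul (polyRep p) g h]

/-- The determinant of `g ∈ GL₂(𝔽_p)` as a unit of `F̄_p`. -/
noncomputable def detUnit : GL2 p →* (F p)ˣ :=
  (Units.map (algebraMap (ZMod p) (F p)).toMonoidHom).comp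
    (Matrix.GeneralLinearGroup.det)

set_option synthInstance.maxHeartbeats 1000000 in
/-- `det^a ⊗ Sym^n F̄_p²` for an integer power `a` of the determinant character. -/
noncomputable def VRepZ (a : ℤ) (n : ℕ) : Representation (F p) (GL2 p) (SymSpace p n) where
  toFun g := ((detUnit p g ^ a : (F p)ˣ) : F p) • symRep p n g
  map_one' := by
    show ((detUnit p 1 ^ a : (F p)ˣ) : F p) • symRep p n 1 = 1
    rw [map_one, one_zpow, Units.val_one, one_smul, map_one]
  map_mul' g h := by
    show ((detUnit p (g * h) ^ a : (F p)ˣ) : F p) • symRep p n (g * h) =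
      (((detUnit p g ^ a : (F p)ˣ) : F p) • symRep p n g) *
        (((detUnit p h ^ a : (F p)ˣ) : F p) • symRep p n h)
    rw [map_mul, map_mul, mul_zpow, Units.val_mul, smul_mul_smul_comm]

/-- `V_{a,b} = det^a ⊗ Sym^{b-1} F̄_p²` is `VRep p a (b-1)`. -/
noncomputable def VRep (a n : ℕ) : Representation (F p) (GL2 p) (SymSpace p n) :=
  VRepZ p (a : ℤ) n

noncomputable instance (n : ℕ) : FiniteDimensional (F p) (SymSpace p n) := by
  have h : SymSpace p n ≤ restrictTotalDegree (Fin 2) (F p) n := by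
    intro x hx
    rw [mem_restrictTotalDegree]
    exact IsHomogeneous.totalDegree_le ((mem_homogeneousSubmodule _ _).mp hx)
  exact Submodule.finiteDimensional_of_le h

/-- `ρV` is a Jordan–Hölder constituent (a subquotient) of `ρW`. -/
def IsConstituent {V W : Type} [AddCommGroup V] [Module (F p) V] [AddCommGroup W]
    [Module (F p) W] (ρV : Representation (F p) (GL2 p) V)
    (ρW : Representation (F p) (GL2 p) W) : Prop :=
  ∃ A B : Submodule (MonoidAlgebra (F p) (GL2 p)) (Representation.asModule ρW),
    A ≤ B ∧ Nonempty ((↥B ⧸ Submodule.comap B.subtype A) ≃ₗ[MonoidAlgebra (F p) (GL2 p)]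
      Representation.asModule ρV)

/-- The subgroup of relations `[B] - [A] - [C]` coming from short exact sequences
`0 → A → B → C → 0` of finite-dimensional representations. -/
noncomputable def grothRel : AddSubgroup (FreeAbelianGroup (FDRep (F p) (GL2 p))) :=
  AddSubgroup.closure { x | ∃ (A B C : FDRep (F p) (GL2 p))
      (S : Submodule (MonoidAlgebra (F p) (GL2 p)) (Representation.asModule B.ρ)),
      Nonempty (Representation.asModule A.ρ ≃ₗ[MonoidAlgebra (F p) (GL2 p)] S) ∧
      Nonempty (Representation.asModule C.ρ ≃ₗ[MonoidAlgebra (F p) (GL2 p)]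
        (Representation.asModule B.ρ ⧸ S)) ∧
      x = FreeAbelianGroup.of B - FreeAbelianGroup.of A - FreeAbelianGroup.of C }

/-- The Grothendieck group `G₀(F̄_p[GL₂(𝔽_p)])` of finite-dimensional representations. -/
abbrev Groth := FreeAbelianGroup (FDRep (F p) (GL2 p)) ⧸ grothRel p

/-- The class of a finite-dimensional representation in the Grothendieck group. -/
noncomputable def cls (W : FDRep (F p) (GL2 p)) : Groth p :=
  QuotientAddGroup.mk (FreeAbelianGroup.of W)

/-- The class `[det^a ⊗ Sym^m]` in the Grothendieck group, for `m : ℤ`, with the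
conventions `[Sym^{-1}] = 0` and `[Sym^k] = -[det^{k+1} ⊗ Sym^{-k-2}]` for `k < -1`,
twisted by `det^a`. -/
noncomputable def dCls (a m : ℤ) : Groth p :=
  if 0 ≤ m then cls p (FDRep.of (VRepZ p a m.toNat))
  else if m = -1 then 0
  else - cls p (FDRep.of (VRepZ p (a + m + 1) (-m - 2).toNat))

/-- The explicit formula for the minimal weight `k_min(V_{a,b})`. -/
def kf (p a b : ℕ) : ℕ := if a + b < p then a*(p+1)+b+1 else (a+1)*(p+1)+b*p-p^2

/-!
Over `𝔽_p`, `∑ₜ tᵉ` is `-1` when `e` is a positive multiple of `p - 1` and `0` otherwise. Hence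
averaging the transvection `X_j ↦ X_j + t X_i` against `t ^ (p - 1 - k)` extracts a Taylor
coefficient: for `0 < k < p` and `b < p` it sends `X_i ^ a * X_j ^ b` to
`-(b.choose k) • X_i ^ (a + k) * X_j ^ (b - k)`. Taking `k` to be the largest `X₁`-degree of a
nonzero `f` in a subrepresentation of `Sym^n` leaves a nonzero multiple of `X₀ ^ n`; applying the
opposite transvection to `X₀ ^ n` then yields every monomial `X₁ ^ k * X₀ ^ (n - k)`, because
`n.choose k ≠ 0` in characteristic `p > n`.
-/

open Finset

theorem cast_choose_ne_zero_of_lt {R : Type*} [AddMonoidWithOne R] [CharP R p] {n k : ℕ}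
    (hk : k ≤ n) (hn : n < p) : (n.choose k : R) ≠ 0 := by
  rw [Ne, CharP.cast_eq_zero_iff R p]
  intro hdvd
  have : p ∣ n.factorial := hdvd.trans <| Nat.choose_mul_factorial_mul_factorial hk ▸
    (dvd_mul_right _ _).mul_right _
  exact absurd ((Fact.out : p.Prime).dvd_factorial.mp this) (by omega)

section

variable {p}

theorem ZMod.sum_pow_eq_ite (i : ℕ) :
    ∑ x : ZMod p, x ^ i = if i ≠ 0 ∧ p - 1 ∣ i then -1 else 0 := by
  classical
  rcases Nat.eq_zero_or_pos i with rfl | hi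
  · simp
  have hunits : univ.map ⟨((↑) : (ZMod p)ˣ → ZMod p), Units.val_injective⟩ = univ.erase 0 := by
    ext x
    simp only [mem_map, mem_univ, true_and, mem_erase, and_true, Function.Embedding.coeFn_mk]
    exact isUnit_iff_ne_zero
  rw [← sum_erase _ (zero_pow hi.ne'), ← hunits, sum_map]
  simp [FiniteField.sum_pow_units (ZMod p), ZMod.card, hi.ne']

theorem ZMod.sum_pow_sub_add_eq_ite {k m : ℕ} (hk : 0 < k) (hkp : k < p) (hmp : m < p) :
    ∑ x : ZMod p, x ^ (p - 1 - k + m) = if m = k then -1 else 0 := by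
  rw [ZMod.sum_pow_eq_ite]
  by_cases hmk : m = k
  · subst hmk
    rw [show p - 1 - m + m = p - 1 by omega, if_pos rfl, if_pos ⟨by omega, dvd_rfl⟩]
  · rw [if_neg hmk, if_neg]
    rintro ⟨hne, c, hc⟩
    have hc2 : c < 2 := Nat.lt_of_mul_lt_mul_left (a := p - 1) (by omega)
    interval_cases c <;> omega

theorem ZMod.sum_pow_smul_sum_pow_smul {M : Type*} [AddCommGroup M] [Module (ZMod p) M]
    (v : ℕ → M) {k : ℕ} (hk : 0 < k) (hkp : k < p) :
    ∑ x : ZMod p, x ^ (p - 1 - k) • ∑ m ∈ range p, x ^ m • v m = -v k := by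
  calc ∑ x : ZMod p, x ^ (p - 1 - k) • ∑ m ∈ range p, x ^ m • v m
      = ∑ m ∈ range p, (∑ x : ZMod p, x ^ (p - 1 - k + m)) • v m := by
        simp only [smul_sum, smul_smul, ← pow_add, sum_smul]
        exact sum_comm
    _ = -v k := by
        rw [sum_congr rfl fun m hm => by
          rw [ZMod.sum_pow_sub_add_eq_ite hk hkp (mem_range.mp hm)]]
        simp [ite_smul, hkp]

end

namespace MvPolynomial

variable {R : Type*} [CommSemiring R]

theorem monomial_eq_smul_X_zero_pow_mul (d : Fin 2 →₀ ℕ) (c : R) :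
    monomial d c = c • (X 0 ^ d 0 * X 1 ^ d 1) := by
  rw [monomial_eq, Finsupp.prod_fintype _ _ (fun _ => pow_zero _), Fin.prod_univ_two, smul_eq_C_mul]

namespace IsHomogeneous

variable {f : MvPolynomial (Fin 2) R} {n : ℕ}

theorem add_eq_of_mem_support (hf : f.IsHomogeneous n) {d : Fin 2 →₀ ℕ} (hd : d ∈ f.support) :
    d 0 + d 1 = n := by
  rw [← hf (mem_support_iff.mp hd)]
  simp [Finsupp.weight_apply, Finsupp.sum_fintype, Fin.sum_univ_two]

theorem eq_of_mem_support (hf : f.IsHomogeneous n) {d : Fin 2 →₀ ℕ} (hd : d ∈ f.support) :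
    d = Finsupp.single 0 (n - d 1) + Finsupp.single 1 (d 1) := by
  have := hf.add_eq_of_mem_support hd
  ext i
  fin_cases i <;> simp; omega

theorem eq_smul_X_zero_pow (hf : f.IsHomogeneous n) (hsupp : ∀ d ∈ f.support, d 1 = 0) :
    f = coeff (Finsupp.single 0 n) f • X 0 ^ n := by
  conv_lhs => rw [f.as_sum]
  rw [sum_eq_single (Finsupp.single 0 n), monomial_eq_smul_X_zero_pow_mul]
  · simp
  · intro d hd hne
    exact absurd (by simpa [hsupp d hd] using hf.eq_of_mem_support hd) hne
  · intro h
    rw [notMem_support_iff.mp h, monomial_zero]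

end IsHomogeneous

end MvPolynomial

noncomputable def transvectionGL {n K : Type*} [Fintype n] [DecidableEq n] [Field K] {i j : n}
    (hij : i ≠ j) (c : K) : GL n K :=
  .mkOfDetNeZero (Matrix.transvection i j c) (by simp [Matrix.det_transvection_of_ne i j hij])

section

variable {p} {i j : Fin 2} (hij : i ≠ j)

theorem matAct_transvectionGL_X_self (t : ZMod p) :
    matAct p (transvectionGL hij t) (X i) = X i := by
  simp [matAct, transvectionGL, Matrix.transvection, Matrix.one_apply, Matrix.single_apply,
    add_smul, sum_add_distrib, hij.symm]

theorem matAct_transvectionGL_X (t : ZMod p) :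
    matAct p (transvectionGL hij t) (X j) = X j + t • X i := by
  simp [matAct, transvectionGL, Matrix.transvection, Matrix.one_apply, Matrix.single_apply,
    add_smul, sum_add_distrib, -Fin.sum_univ_two]

theorem matAct_transvectionGL_X_pow_mul (t : ZMod p) (a : ℕ) {b : ℕ} (hb : b < p) :
    matAct p (transvectionGL hij t) (X i ^ a * X j ^ b) =
      ∑ m ∈ range p, t ^ m • ((b.choose m : F p) • (X i ^ (a + m) * X j ^ (b - m))) := by
  rw [map_mul, map_pow, map_pow, matAct_transvectionGL_X_self, matAct_transvectionGL_X, add_comm,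
    add_pow, mul_sum]
  refine sum_subset (range_subset_range.mpr hb) (fun m _ hm => ?_) |>.trans (sum_congr rfl ?_)
  · rw [Nat.choose_eq_zero_of_lt (by simpa using hm), Nat.cast_zero, mul_zero, mul_zero]
  · intro m _
    simp only [Algebra.smul_def, map_pow, map_natCast]
    ring

theorem sum_pow_smul_matAct_transvectionGL (a : ℕ) {b k : ℕ} (hb : b < p) (hk : 0 < k)
    (hkp : k < p) :
    ∑ t : ZMod p, t ^ (p - 1 - k) • matAct p (transvectionGL hij t) (X i ^ a * X j ^ b) =
      -((b.choose k : F p) • (X i ^ (a + k) * X j ^ (b - k))) := by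
  simp_rw [matAct_transvectionGL_X_pow_mul hij _ a hb]
  exact ZMod.sum_pow_smul_sum_pow_smul _ hk hkp

theorem sum_pow_smul_matAct_transvectionGL_of_le {n k : ℕ} (hn : n < p) (hk : 0 < k)
    (hkn : k ≤ n) {f : MvPolynomial (Fin 2) (F p)} (hf : f.IsHomogeneous n)
    (hsupp : ∀ d ∈ f.support, d 1 ≤ k) :
    ∑ t : ZMod p, t ^ (p - 1 - k) • matAct p (transvectionGL zero_ne_one t) f =
      -(coeff (Finsupp.single 0 (n - k) + Finsupp.single 1 k) f • X 0 ^ n) := by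
  have hterm : ∀ d ∈ f.support, ∑ t : ZMod p, t ^ (p - 1 - k) •
      matAct p (transvectionGL zero_ne_one t) (monomial d (coeff d f)) =
      if d = Finsupp.single 0 (n - k) + Finsupp.single 1 k then -(coeff d f • X 0 ^ n) else 0 := by
    intro d hd
    have hdn := hf.add_eq_of_mem_support hd
    simp_rw [monomial_eq_smul_X_zero_pow_mul, map_smul, smul_comm _ (coeff d f), ← smul_sum,
      sum_pow_smul_matAct_transvectionGL (p := p) zero_ne_one (d 0) (b := d 1) (by omega) hk
        (by omega)]
    split_ifs with hD
    · subst hD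
      simp [Nat.sub_add_cancel hkn]
    · have : d 1 < k := (hsupp d hd).lt_of_ne fun h => hD (h ▸ hf.eq_of_mem_support hd)
      simp [Nat.choose_eq_zero_of_lt this]
  conv_lhs => rw [f.as_sum]
  simp_rw [map_sum, smul_sum]
  rw [sum_comm, sum_congr rfl hterm, sum_ite_eq']
  split_ifs with h
  · rfl
  · rw [notMem_support_iff.mp h, zero_smul, neg_zero]

end

section

variable {p} (W : Subrepresentation (polyRep p))

theorem sum_pow_smul_matAct_mem (e : ℕ) (g : ZMod p → GL2 p) {f : MvPolynomial (Fin 2) (F p)}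
    (hf : f ∈ W.toSubmodule) : ∑ t : ZMod p, t ^ e • matAct p (g t) f ∈ W.toSubmodule :=
  sum_mem fun t _ => Submodule.smul_of_tower_mem _ _ (W.apply_mem_toSubmodule (g t) hf)

theorem X_pow_mul_X_pow_mem_of_X_pow_mem {i j : Fin 2} (hij : i ≠ j) {n : ℕ} (hn : n < p)
    (h : X j ^ n ∈ W.toSubmodule) {k : ℕ} (hk : k ≤ n) :
    X i ^ k * X j ^ (n - k) ∈ W.toSubmodule := by
  rcases k.eq_zero_or_pos with rfl | hk₀
  · simpa using h
  have := sum_pow_smul_matAct_mem W (p - 1 - k) (transvectionGL hij)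
    (show X i ^ 0 * X j ^ n ∈ W.toSubmodule by simpa using h)
  rwa [sum_pow_smul_matAct_transvectionGL hij 0 hn hk₀ (by omega), neg_mem_iff,
    Submodule.smul_mem_iff _ (cast_choose_ne_zero_of_lt p hk hn), zero_add] at this

theorem X_zero_pow_mem_of_ne_zero {n : ℕ} (hn : n < p) {f : MvPolynomial (Fin 2) (F p)}
    (hf : f.IsHomogeneous n) (hf₀ : f ≠ 0) (hfW : f ∈ W.toSubmodule) :
    X 0 ^ n ∈ W.toSubmodule := by
  obtain ⟨D, hD, hDk⟩ := f.support.exists_mem_eq_sup (support_nonempty.mpr hf₀) (· 1)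
  have hsupp : ∀ d ∈ f.support, d 1 ≤ D 1 := fun d hd => hDk ▸ le_sup (f := (· 1)) hd
  have hD₀ : coeff (Finsupp.single 0 (n - D 1) + Finsupp.single 1 (D 1)) f ≠ 0 :=
    hf.eq_of_mem_support hD ▸ mem_support_iff.mp hD
  rcases (D 1).eq_zero_or_pos with hk | hk
  · rw [hk, Finsupp.single_zero, add_zero, Nat.sub_zero] at hD₀
    rwa [hf.eq_smul_X_zero_pow (fun d hd => by simpa [hk] using hsupp d hd),
      Submodule.smul_mem_iff _ hD₀] at hfW
  · have hDn := hf.add_eq_of_mem_support hD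
    have := sum_pow_smul_matAct_mem W (p - 1 - D 1) (transvectionGL zero_ne_one) hfW
    rwa [sum_pow_smul_matAct_transvectionGL_of_le hn hk (by omega) hf hsupp, neg_mem_iff,
      Submodule.smul_mem_iff _ hD₀] at this

theorem symSpace_le_of_ne_zero {n : ℕ} (hn : n < p) {f : MvPolynomial (Fin 2) (F p)}
    (hf : f.IsHomogeneous n) (hf₀ : f ≠ 0) (hfW : f ∈ W.toSubmodule) :
    SymSpace p n ≤ W.toSubmodule := by
  have hX := X_zero_pow_mem_of_ne_zero W hn hf hf₀ hfW
  intro g hg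
  rw [g.as_sum]
  refine sum_mem fun d hd => ?_
  have hdn := ((mem_homogeneousSubmodule n g).mp hg).add_eq_of_mem_support hd
  rw [monomial_eq_smul_X_zero_pow_mul, mul_comm]
  refine Submodule.smul_mem _ _ ?_
  simpa [show n - d 1 = d 0 by omega] using
    X_pow_mul_X_pow_mem_of_X_pow_mem W one_ne_zero hn hX (k := d 1) (by omega)

end

instance {A G V : Type*} [Semiring A] [Monoid G] [AddCommMonoid V] [Module A V] [Nontrivial V]
    {ρ : Representation A G V} : Nontrivial (Subrepresentation ρ) :=
  ⟨⊥, ⊤, fun h => bot_ne_top (congrArg Subrepresentation.toSubmodule h)⟩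

section

variable {p} {n : ℕ}

noncomputable def Subrepresentation.toPolyRep (σ : Subrepresentation (symRep p n)) :
    Subrepresentation (polyRep p) where
  toSubmodule := σ.toSubmodule.map (SymSpace p n).subtype
  apply_mem_toSubmodule g := by
    rintro _ ⟨v, hv, rfl⟩
    exact ⟨symRep p n g v, σ.apply_mem_toSubmodule g hv, rfl⟩

theorem symRep_subrepresentation_eq_top (hn : n < p) {σ : Subrepresentation (symRep p n)}
    (hσ : σ ≠ ⊥) : σ = ⊤ := by
  obtain ⟨v, hv, hv₀⟩ :=
    Submodule.exists_mem_ne_zero_of_ne_bot fun h => hσ (Subrepresentation.ext h)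
  have hle := symSpace_le_of_ne_zero σ.toPolyRep hn ((mem_homogeneousSubmodule n _).mp v.2)
    (by simpa using hv₀) ⟨v, hv, rfl⟩
  refine Subrepresentation.ext (eq_top_iff.mpr fun w _ => ?_)
  obtain ⟨w', hw', hw'w⟩ := hle w.2
  rwa [Subtype.ext hw'w] at hw'

end

/-- for `0 ≤ n ≤ p-1`, the representation `Sym^n F̄_p²` of `GL₂(𝔽_p)`
is irreducible. -/
theorem sym_irreducible (p : ℕ) [Fact p.Prime] (n : ℕ) (hn : n ≤ p - 1) :
    IsSimpleModule (MonoidAlgebra (F p) (GL2 p)) (Representation.asModule (symRep p n)) := by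
  have hnp : n < p := by have := (Fact.out : p.Prime).two_le; omega
  have : Nontrivial (SymSpace p n) := Submodule.nontrivial_iff_ne_bot.mpr <|
    (Submodule.ne_bot_iff _).mpr ⟨X 0 ^ n, isHomogeneous_X_pow 0 n, pow_ne_zero _ (X_ne_zero 0)⟩
  rw [← Representation.irreducible_iff_isSimpleModule_asModule]
  exact ⟨fun σ => or_iff_not_imp_left.mpr (symRep_subrepresentation_eq_top hnp)⟩
end

section
/- Let p be an odd prime, and define V_{a,b} := det^a ⊗ Sym^{b-1} F̄_p^2 for 0 ≤ a ≤ p-2, 1 ≤ b ≤ p. Define k'(a,b) := a(p+1)+b+1 if a+b < p, and k'(a,b) := (a+1)(p+1)+bp-p^2 if a+b ≥ p. Then V_{a,b} is a Jordan–Hölder constituent of Sym^{k'(a,b)-2} F̄_p^2. -/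
open MvPolynomial

variable (p : ℕ) [Fact p.Prime]

/-!
The Dickson invariant `θ = X Y^p - X^p Y` transforms under `GL₂(𝔽_p)` by `det`, so
multiplication by `θⁿ` embeds `det^n ⊗ Sym^m` into `Sym^{(p+1)n+m}`. If `a + b < p` this
already places `V_{a,b}` inside `Sym^{k'(a,b)-2}`. Otherwise write `a = n + t`, `b = p - t`, so
that `k'(a,b) - 2 = (p+1)n + (p+t-1)`. The map `X^u Y^v ↦ C(u,t) X^{u-t} Y^{v-t}` is an
equivariant surjection `Sym^{p+t-1} ↠ det^t ⊗ Sym^{p-t-1}`: in characteristic `p` the coefficient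
`C(u,t)` vanishes as soon as `v < t`, and equivariance is checked on diagonal matrices, the swap
and transvections, which generate `GL₂`. Hence `V_{a,b}` is a quotient of `θⁿ · Sym^{p+t-1}`.
-/

theorem Nat.choose_mul_choose_sub_comm {u j t : ℕ} (hj : j ≤ u) :
    u.choose j * (u - j).choose t = u.choose t * (u - t).choose j := by
  rcases le_or_gt t (u - j) with h | h
  · rw [← Nat.choose_symm hj, Nat.choose_mul h, Nat.sub_right_comm,
      Nat.choose_symm (by omega : j ≤ u - t)]
  · rw [Nat.choose_eq_zero_of_lt h, mul_zero]
    rcases le_or_gt t u with h' | h'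
    · rw [Nat.choose_eq_zero_of_lt (by omega : u - t < j), mul_zero]
    · rw [Nat.choose_eq_zero_of_lt h', zero_mul]

section CharP

variable {R : Type*} [CommRing R] {p : ℕ} [Fact p.Prime] [CharP R p]

theorem choose_cast_eq_zero_of_lt {u v t : ℕ} (ht : t < p) (huv : u + v = p + t - 1)
    (hv : v < t) : (u.choose t : R) = 0 :=
  (CharP.cast_eq_zero_iff R p _).mpr ((Fact.out : p.Prime).dvd_choose ht (by omega) (by omega))

theorem le_of_choose_cast_ne_zero {u v t : ℕ} (ht : t < p) (huv : u + v = p + t - 1)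
    (h : (u.choose t : R) ≠ 0) : t ≤ u ∧ t ≤ v := by
  refine ⟨?_, ?_⟩
  · by_contra! hu
    exact h (by rw [Nat.choose_eq_zero_of_lt hu, Nat.cast_zero])
  · by_contra! hv
    exact h (choose_cast_eq_zero_of_lt ht huv hv)

theorem choose_cast_ne_zero {u t : ℕ} (hu : u < p) (ht : t ≤ u) : (u.choose t : R) ≠ 0 := by
  rw [Ne, CharP.cast_eq_zero_iff R p]
  have hp : p.Prime := Fact.out
  exact (hp.coprime_iff_not_dvd).mp (hp.coprime_choose_of_lt hu ht)

/-- Modulo `p`, `v ≡ t - 1 - u`, and `C(t - 1 - u, t) = (-1)^t C(u, t)` by upper negation. -/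
theorem choose_cast_eq_neg_one_pow_mul [IsDomain R] {u v t : ℕ} (ht : t < p)
    (huv : u + v = p + t - 1) : (v.choose t : R) = (-1) ^ t * u.choose t := by
  replace huv : u + v + 1 = p + t := by omega
  have hfact : (t.factorial : R) ≠ 0 := by
    rw [Ne, CharP.cast_eq_zero_iff R p, (Fact.out : p.Prime).dvd_factorial]
    omega
  have hv : (v : R) - t + 1 = -u := by
    have h := congrArg (Nat.cast : ℕ → R) huv
    push_cast [CharP.cast_eq_zero] at h
    linear_combination h
  apply mul_left_cancel₀ hfact
  rw [mul_left_comm, ← Nat.cast_mul, ← Nat.cast_mul,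
    ← Nat.descFactorial_eq_factorial_mul_choose, ← Nat.descFactorial_eq_factorial_mul_choose,
    ← descPochhammer_eval_eq_descFactorial,
    ← descPochhammer_eval_eq_descFactorial, descPochhammer_eval_eq_ascPochhammer, hv,
    ascPochhammer_eval_neg_eq_descPochhammer]

end CharP

section LinSubst

variable {R : Type*} [CommRing R]

/-- `matAct` for an arbitrary `2 × 2` matrix over any commutative ring. -/
noncomputable def linSubst (M : Matrix (Fin 2) (Fin 2) R) :
    MvPolynomial (Fin 2) R →ₐ[R] MvPolynomial (Fin 2) R :=
  aeval fun i => ∑ j, M j i • X j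

theorem linSubst_X (M : Matrix (Fin 2) (Fin 2) R) (i : Fin 2) :
    linSubst M (X i) = M 0 i • X 0 + M 1 i • X 1 := by
  rw [linSubst, aeval_X, Fin.sum_univ_two]

theorem linSubst_mul (M N : Matrix (Fin 2) (Fin 2) R) :
    linSubst (M * N) = (linSubst M).comp (linSubst N) := by
  refine MvPolynomial.algHom_ext fun i => ?_
  simp only [AlgHom.comp_apply, linSubst_X, map_add, map_smul, Matrix.mul_apply,
    Fin.sum_univ_two]
  module

theorem linSubst_mem_homogeneousSubmodule (M : Matrix (Fin 2) (Fin 2) R) {n : ℕ}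
    {f : MvPolynomial (Fin 2) R} (hf : f ∈ homogeneousSubmodule (Fin 2) R n) :
    linSubst M f ∈ homogeneousSubmodule (Fin 2) R n := by
  have hlin : ∀ i, (∑ j, M j i • X j : MvPolynomial (Fin 2) R).IsHomogeneous 1 := fun i =>
    IsHomogeneous.sum _ _ _ fun j _ => by
      simpa only [smul_eq_C_mul] using (isHomogeneous_X R j).C_mul (M j i)
  have h : (linSubst M f).IsHomogeneous (1 * n) := hf.aeval _ hlin
  rwa [one_mul] at h

theorem linSubst_diagonal_X_pow_mul_X_pow (d : Fin 2 → R) (u v : ℕ) :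
    linSubst (Matrix.diagonal d) (X 0 ^ u * X 1 ^ v) =
      (d 0 ^ u * d 1 ^ v) • (X 0 ^ u * X 1 ^ v) := by
  simp only [map_mul, map_pow, linSubst_X, Matrix.diagonal_apply_eq,
    Matrix.diagonal_apply_ne _ (by decide : (0 : Fin 2) ≠ 1),
    Matrix.diagonal_apply_ne _ (by decide : (1 : Fin 2) ≠ 0), zero_smul, add_zero, zero_add,
    smul_pow, smul_mul_smul_comm]

theorem linSubst_swap_X_pow_mul_X_pow (u v : ℕ) :
    linSubst !![0, 1; 1, (0 : R)] (X 0 ^ u * X 1 ^ v) = X 0 ^ v * X 1 ^ u := by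
  simp [linSubst_X, mul_comm]

theorem linSubst_transvection_X_pow_mul_X_pow (c : R) {u n : ℕ} (hu : u ≤ n) (v : ℕ) :
    linSubst (Matrix.transvection 1 0 c) (X 0 ^ u * X 1 ^ v) =
      ∑ j ∈ Finset.range (n + 1),
        (u.choose j * c ^ j : R) • (X 0 ^ (u - j) * X 1 ^ (v + j)) := by
  have hX0 : linSubst (Matrix.transvection 1 0 c) (X 0) = c • X 1 + X 0 := by
    simp [linSubst_X, Matrix.transvection, add_comm]
  have hX1 : linSubst (Matrix.transvection 1 0 c) (X 1) = X 1 := by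
    simp [linSubst_X, Matrix.transvection]
  rw [map_mul, map_pow, map_pow, hX0, hX1, add_pow, Finset.sum_mul]
  refine Finset.sum_subset (Finset.range_subset_range.mpr (by omega)) (fun j _ hj => ?_)
    |>.trans (Finset.sum_congr rfl fun j _ => ?_)
  · rw [Finset.mem_range, not_lt] at hj
    rw [Nat.choose_eq_zero_of_lt (by omega), Nat.cast_zero, mul_zero, zero_mul]
  · rw [smul_pow, pow_add, ← Nat.cast_comm]
    simp only [smul_eq_C_mul, map_mul, map_pow, map_natCast]
    ring

theorem monomial_one_fin_two (e : Fin 2 →₀ ℕ) :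
    monomial e (1 : R) = X 0 ^ e 0 * X 1 ^ e 1 := by
  rw [monomial_eq, C_1, one_mul, Finsupp.prod_fintype _ _ fun _ => pow_zero _, Fin.prod_univ_two]

theorem homogeneousSubmodule_fin_two_eq_span (d : ℕ) :
    homogeneousSubmodule (Fin 2) R d =
      Submodule.span R {f | ∃ u v, u + v = d ∧ X 0 ^ u * X 1 ^ v = f} := by
  rw [homogeneousSubmodule_eq_finsupp_supported, AddMonoidAlgebra.supported_eq_span_single]
  congr 1
  ext f
  simp only [single_eq_monomial, Set.mem_image, Set.mem_ofPred_eq, Finsupp.degree_eq_sum,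
    Fin.sum_univ_two]
  constructor
  · rintro ⟨e, he, rfl⟩
    exact ⟨e 0, e 1, he, (monomial_one_fin_two e).symm⟩
  · rintro ⟨u, v, huv, rfl⟩
    refine ⟨Finsupp.single 0 u + Finsupp.single 1 v, by simpa using huv, ?_⟩
    simp [monomial_one_fin_two]

end LinSubst

section Reduction

variable {R : Type*} [CommRing R]

noncomputable def reduction (t : ℕ) : MvPolynomial (Fin 2) R →ₗ[R] MvPolynomial (Fin 2) R :=
  (basisMonomials (Fin 2) R).constr R fun e =>
    ((e 0).choose t : R) • (X 0 ^ (e 0 - t) * X 1 ^ (e 1 - t))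

theorem reduction_X_pow_mul_X_pow (t u v : ℕ) :
    reduction t (X 0 ^ u * X 1 ^ v : MvPolynomial (Fin 2) R) =
      (u.choose t : R) • (X 0 ^ (u - t) * X 1 ^ (v - t)) := by
  have h := (basisMonomials (Fin 2) R).constr_basis R
    (fun e => ((e 0).choose t : R) • (X 0 ^ (e 0 - t) * X 1 ^ (e 1 - t) : MvPolynomial (Fin 2) R))
    (Finsupp.single 0 u + Finsupp.single 1 v)
  simpa [reduction, coe_basisMonomials, monomial_one_fin_two] using h

variable (p t : ℕ)

def ReductionEquivariant (M : Matrix (Fin 2) (Fin 2) R) : Prop :=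
  ∀ f ∈ homogeneousSubmodule (Fin 2) R (p + t - 1),
    reduction t (linSubst M f) = M.det ^ t • linSubst M (reduction t f)

variable {p t}

theorem ReductionEquivariant.mul {M N : Matrix (Fin 2) (Fin 2) R}
    (hM : ReductionEquivariant p t M) (hN : ReductionEquivariant p t N) :
    ReductionEquivariant p t (M * N) := by
  intro f hf
  rw [linSubst_mul, AlgHom.comp_apply, hM _ (linSubst_mem_homogeneousSubmodule N hf), hN f hf,
    map_smul, smul_smul, Matrix.det_mul, mul_pow, AlgHom.comp_apply]

theorem reductionEquivariant_of_X_pow_mul_X_pow {M : Matrix (Fin 2) (Fin 2) R}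
    (h : ∀ u v, u + v = p + t - 1 →
      reduction t (linSubst M (X 0 ^ u * X 1 ^ v)) =
        M.det ^ t • linSubst M (reduction t (X 0 ^ u * X 1 ^ v))) :
    ReductionEquivariant p t M := by
  intro f hf
  rw [homogeneousSubmodule_fin_two_eq_span] at hf
  refine LinearMap.eqOn_span (f := reduction t ∘ₗ (linSubst M).toLinearMap)
    (g := M.det ^ t • (linSubst M).toLinearMap ∘ₗ reduction t) ?_ hf
  rintro _ ⟨u, v, huv, rfl⟩
  exact h u v huv

variable [Fact p.Prime] [CharP R p]

theorem reductionEquivariant_diagonal (ht : t < p) (d : Fin 2 → R) :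
    ReductionEquivariant p t (Matrix.diagonal d) := by
  refine reductionEquivariant_of_X_pow_mul_X_pow fun u v huv => ?_
  rw [linSubst_diagonal_X_pow_mul_X_pow, map_smul, reduction_X_pow_mul_X_pow, map_smul,
    linSubst_diagonal_X_pow_mul_X_pow, smul_smul, smul_smul, smul_smul,
    Matrix.det_diagonal, Fin.prod_univ_two]
  rcases eq_or_ne (u.choose t : R) 0 with h | h
  · simp [h]
  obtain ⟨htu, htv⟩ := le_of_choose_cast_ne_zero ht huv h
  congr 1
  rw [← Nat.sub_add_cancel htu, ← Nat.sub_add_cancel htv]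
  simp only [Nat.add_sub_cancel]
  ring

theorem reductionEquivariant_swap [IsDomain R] (ht : t < p) :
    ReductionEquivariant p t !![0, 1; 1, (0 : R)] := by
  refine reductionEquivariant_of_X_pow_mul_X_pow fun u v huv => ?_
  rw [linSubst_swap_X_pow_mul_X_pow, reduction_X_pow_mul_X_pow, reduction_X_pow_mul_X_pow,
    map_smul, linSubst_swap_X_pow_mul_X_pow, smul_smul, Matrix.det_fin_two_of,
    choose_cast_eq_neg_one_pow_mul ht huv]
  ring_nf

theorem reductionEquivariant_transvection_one_zero (ht : t < p) (c : R) :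
    ReductionEquivariant p t (Matrix.transvection 1 0 c) := by
  refine reductionEquivariant_of_X_pow_mul_X_pow fun u v huv => ?_
  rw [Matrix.det_transvection_of_ne _ _ (by decide), one_pow, one_smul,
    linSubst_transvection_X_pow_mul_X_pow c le_rfl, map_sum, reduction_X_pow_mul_X_pow,
    map_smul, linSubst_transvection_X_pow_mul_X_pow c (Nat.sub_le u t), Finset.smul_sum]
  refine Finset.sum_congr rfl fun j hj => ?_
  have hcoeff : (u.choose j * c ^ j : R) * (u - j).choose t =
      u.choose t * ((u - t).choose j * c ^ j) := by
    have h := congrArg (Nat.cast : ℕ → R)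
      (Nat.choose_mul_choose_sub_comm (Finset.mem_range_succ_iff.mp hj) (t := t))
    push_cast at h
    linear_combination c ^ j * h
  rw [map_smul, reduction_X_pow_mul_X_pow, smul_smul, smul_smul, hcoeff]
  rcases eq_or_ne (u.choose t : R) 0 with h | h
  · simp [h]
  obtain ⟨-, htv⟩ := le_of_choose_cast_ne_zero ht huv h
  rw [Nat.sub_right_comm, Nat.sub_add_comm htv]

theorem reductionEquivariant_transvection [IsDomain R] (ht : t < p)
    (τ : Matrix.TransvectionStruct (Fin 2) R) : ReductionEquivariant p t τ.toMatrix := by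
  obtain ⟨i, j, hij, c⟩ := τ
  fin_cases i <;> fin_cases j
  · exact absurd rfl hij
  · have hconj : Matrix.transvection 0 1 c =
        !![0, 1; 1, 0] * Matrix.transvection 1 0 c * !![0, 1; 1, 0] := by
      rw [Matrix.transvection, Matrix.transvection, Matrix.eta_fin_two (1 + Matrix.single 0 1 c),
        Matrix.eta_fin_two (1 + Matrix.single 1 0 c)]
      simp
    change ReductionEquivariant p t (Matrix.transvection 0 1 c)
    rw [hconj]
    exact ((reductionEquivariant_swap ht).mul
      (reductionEquivariant_transvection_one_zero ht c)).mul (reductionEquivariant_swap ht)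
  · exact reductionEquivariant_transvection_one_zero ht c
  · exact absurd rfl hij

end Reduction

section ReductionField

variable {K : Type*} [Field K] {p t : ℕ} [Fact p.Prime] [CharP K p]

theorem reductionEquivariant (ht : t < p) (M : Matrix (Fin 2) (Fin 2) K) :
    ReductionEquivariant p t M :=
  Matrix.diagonal_transvection_induction _ M (fun d _ => reductionEquivariant_diagonal ht d)
    (reductionEquivariant_transvection ht) fun _ _ => ReductionEquivariant.mul

theorem map_reduction_homogeneousSubmodule (ht : t < p) :
    (homogeneousSubmodule (Fin 2) K (p + t - 1)).map (reduction t) =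
      homogeneousSubmodule (Fin 2) K (p - t - 1) := by
  simp only [homogeneousSubmodule_fin_two_eq_span, Submodule.map_span]
  apply le_antisymm
  · rw [Submodule.span_le]
    rintro _ ⟨_, ⟨u, v, huv, rfl⟩, rfl⟩
    rw [reduction_X_pow_mul_X_pow]
    rcases eq_or_ne (u.choose t : K) 0 with h | h
    · rw [h, zero_smul]
      exact Submodule.zero_mem _
    obtain ⟨htu, htv⟩ := le_of_choose_cast_ne_zero ht huv h
    exact Submodule.smul_mem _ _ (Submodule.subset_span ⟨u - t, v - t, by omega, rfl⟩)
  · rw [Submodule.span_le]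
    rintro _ ⟨u, v, huv, rfl⟩
    have h : ((u + t).choose t : K) ≠ 0 := choose_cast_ne_zero (by omega) (by omega)
    have himage : (X 0 ^ u * X 1 ^ v : MvPolynomial (Fin 2) K) =
        ((u + t).choose t : K)⁻¹ • reduction t (X 0 ^ (u + t) * X 1 ^ (v + t)) := by
      rw [reduction_X_pow_mul_X_pow, smul_smul, inv_mul_cancel₀ h, one_smul,
        Nat.add_sub_cancel, Nat.add_sub_cancel]
    rw [himage]
    exact Submodule.smul_mem _ _
      (Submodule.subset_span ⟨_, ⟨u + t, v + t, by omega, rfl⟩, rfl⟩)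

end ReductionField

section Theta

variable {R : Type*} [CommRing R] (p : ℕ)

noncomputable def theta : MvPolynomial (Fin 2) R := X 0 * X 1 ^ p - X 0 ^ p * X 1

theorem theta_isHomogeneous : (theta p : MvPolynomial (Fin 2) R).IsHomogeneous (p + 1) := by
  refine IsHomogeneous.sub ?_ ?_
  · simpa [add_comm] using
      (isHomogeneous_X R (0 : Fin 2)).mul (isHomogeneous_X_pow (1 : Fin 2) p)
  · exact (isHomogeneous_X_pow (0 : Fin 2) p).mul (isHomogeneous_X R 1)

theorem theta_ne_zero [Nontrivial R] (hp : p ≠ 1) : (theta p : MvPolynomial (Fin 2) R) ≠ 0 := by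
  have h1 : (X 0 * X 1 ^ p : MvPolynomial (Fin 2) R) =
      monomial (Finsupp.single 0 1 + Finsupp.single 1 p) 1 := by
    simp [monomial_one_fin_two]
  have h2 : (X 0 ^ p * X 1 : MvPolynomial (Fin 2) R) =
      monomial (Finsupp.single 0 p + Finsupp.single 1 1) 1 := by
    simp [monomial_one_fin_two]
  have hne : Finsupp.single (0 : Fin 2) p + Finsupp.single 1 1 ≠
      Finsupp.single 0 1 + Finsupp.single 1 p :=
    fun he => hp (by simpa using DFunLike.congr_fun he 0)
  intro h
  have hcoeff := congrArg (coeff (Finsupp.single 0 1 + Finsupp.single 1 p)) h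
  rw [theta, h1, h2, coeff_sub, coeff_monomial, coeff_monomial, if_pos rfl, if_neg hne,
    sub_zero, coeff_zero] at hcoeff
  exact one_ne_zero hcoeff

theorem linSubst_theta [Fact p.Prime] [CharP R p] {M : Matrix (Fin 2) (Fin 2) R}
    (hM : ∀ i j, M i j ^ p = M i j) : linSubst M (theta p) = M.det • theta p := by
  have hfrob : ∀ i, linSubst M (X i) ^ p = M 0 i • X 0 ^ p + M 1 i • X 1 ^ p := fun i => by
    rw [linSubst_X, add_pow_char, smul_pow, smul_pow, hM, hM]
  rw [theta, map_sub, map_mul, map_mul, map_pow, map_pow, hfrob, hfrob, linSubst_X, linSubst_X,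
    Matrix.det_fin_two]
  simp only [smul_eq_C_mul, map_sub, map_mul]
  ring

end Theta

section GL2

noncomputable abbrev liftMatrix (g : GL2 p) : Matrix (Fin 2) (Fin 2) (F p) :=
  (g : Matrix (Fin 2) (Fin 2) (ZMod p)).map (algebraMap (ZMod p) (F p))

theorem liftMatrix_apply_pow (g : GL2 p) (i j : Fin 2) :
    liftMatrix p g i j ^ p = liftMatrix p g i j := by
  simp only [liftMatrix, Matrix.map_apply, ← map_pow, ZMod.pow_card]

theorem coe_detUnit (g : GL2 p) : ((detUnit p g : (F p)ˣ) : F p) = (liftMatrix p g).det :=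
  RingHom.map_det _ _

noncomputable def thetaPowMul (n m : ℕ) :
    (VRepZ p n m).IntertwiningMap (symRep p ((p + 1) * n + m)) :=
  LinearMap.intertwiningMap_of_isIntertwiningMap _ _
    ((LinearMap.mulLeft (F p) (theta p ^ n)).restrict fun _ hf =>
      ((theta_isHomogeneous p).pow n).mul hf)
    fun g f => Subtype.ext <| by
      change theta p ^ n * (((detUnit p g ^ (n : ℤ) : (F p)ˣ) : F p) •
          linSubst (liftMatrix p g) (f : MvPolynomial (Fin 2) (F p))) =
        linSubst (liftMatrix p g) (theta p ^ n * (f : MvPolynomial (Fin 2) (F p)))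
      rw [map_mul, map_pow, linSubst_theta p (liftMatrix_apply_pow p g), zpow_natCast,
        Units.val_pow_eq_pow_val, coe_detUnit, smul_pow, mul_smul_comm, smul_mul_assoc]

theorem thetaPowMul_injective (n m : ℕ) : Function.Injective (thetaPowMul p n m) :=
  fun _ _ h => Subtype.ext <| mul_left_cancel₀
    (pow_ne_zero n (theta_ne_zero (R := F p) p (Fact.out : p.Prime).one_lt.ne'))
    (congrArg Subtype.val h)

theorem reduction_mem_symSpace {t : ℕ} (ht : t < p) {f : MvPolynomial (Fin 2) (F p)}
    (hf : f ∈ SymSpace p (p + t - 1)) : reduction t f ∈ SymSpace p (p - t - 1) :=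
  (map_reduction_homogeneousSubmodule (K := F p) ht).le (Submodule.mem_map_of_mem hf)

noncomputable def reductionHom (a : ℤ) {t : ℕ} (ht : t < p) :
    (VRepZ p a (p + t - 1)).IntertwiningMap (VRepZ p (a + t) (p - t - 1)) :=
  LinearMap.intertwiningMap_of_isIntertwiningMap _ _
    ((reduction t).restrict fun _ hf => reduction_mem_symSpace p ht hf)
    fun g f => Subtype.ext <| by
      change reduction t (((detUnit p g ^ a : (F p)ˣ) : F p) • linSubst (liftMatrix p g) f) =
        ((detUnit p g ^ (a + t) : (F p)ˣ) : F p) • linSubst (liftMatrix p g) (reduction t f)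
      rw [map_smul, reductionEquivariant ht (liftMatrix p g) f f.2, smul_smul, zpow_add,
        zpow_natCast, Units.val_mul, Units.val_pow_eq_pow_val, coe_detUnit]

theorem reductionHom_surjective (a : ℤ) {t : ℕ} (ht : t < p) :
    Function.Surjective (reductionHom p a ht) := by
  rintro ⟨f, hf⟩
  obtain ⟨g, hg, rfl⟩ := (map_reduction_homogeneousSubmodule ht).ge hf
  exact ⟨⟨g, hg⟩, rfl⟩

end GL2

theorem isConstituent_of_injective_of_surjective {U : Type*} {V W : Type} [AddCommGroup U]
    [Module (F p) U] [AddCommGroup V] [Module (F p) V] [AddCommGroup W] [Module (F p) W]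
    {ρU : Representation (F p) (GL2 p) U} {ρV : Representation (F p) (GL2 p) V}
    {ρW : Representation (F p) (GL2 p) W} (α : ρU.IntertwiningMap ρW)
    (β : ρU.IntertwiningMap ρV) (hα : Function.Injective α) (hβ : Function.Surjective β) :
    IsConstituent p ρV ρW := by
  let α' := Representation.IntertwiningMap.equivLinearMapAsModule ρU ρW α
  let β' := Representation.IntertwiningMap.equivLinearMapAsModule ρU ρV β
  let e := LinearEquiv.ofInjective α' hα
  have he : (LinearMap.ker β').map (e : ρU.asModule →ₗ[_] LinearMap.range α') =
      ((LinearMap.ker β').map α').comap (LinearMap.range α').subtype := by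
    rw [← Submodule.comap_map_eq_of_injective (LinearMap.range α').injective_subtype
      ((LinearMap.ker β').map (e : ρU.asModule →ₗ[_] LinearMap.range α')),
      ← Submodule.map_comp]
    -- `(range α').subtype ∘ e = α'`
    rfl
  exact ⟨_, _, LinearMap.map_le_range,
    ⟨(Submodule.Quotient.equiv _ _ e he).symm.trans (β'.quotKerEquivOfSurjective hβ)⟩⟩

theorem kf_sub_two_of_lt {p a b : ℕ} (hab : a + b < p) (hb : 1 ≤ b) :
    kf p a b - 2 = (p + 1) * a + (b - 1) := by
  rw [kf, if_pos hab, Nat.mul_comm]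
  omega

theorem kf_sub_two_of_le {p n t : ℕ} (ht : t < p) :
    kf p (n + t) (p - t) - 2 = (p + 1) * n + (p + t - 1) := by
  obtain ⟨s, rfl⟩ : ∃ s, p = t + s + 1 := ⟨p - t - 1, by omega⟩
  have h : (n + t + 1) * (t + s + 1 + 1) + (t + s + 1 - t) * (t + s + 1) =
      (t + s + 1 + 1) * n + (t + s + 1 + t - 1) + 2 + (t + s + 1) ^ 2 := by
    rw [show t + s + 1 - t = s + 1 by omega, show t + s + 1 + t - 1 = 2 * t + s by omega]
    ring
  rw [kf, if_neg (by omega), h]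
  omega

theorem V_constituent_of_kf_general (p : ℕ) [Fact p.Prime] (a b : ℕ)
    (hb1 : 1 ≤ b) (hb : b ≤ p) :
    IsConstituent p (VRep p a (b - 1)) (symRep p (kf p a b - 2)) := by
  rcases lt_or_ge (a + b) p with hab | hab
  · rw [kf_sub_two_of_lt hab hb1]
    exact isConstituent_of_injective_of_surjective p (thetaPowMul p a (b - 1))
      (Representation.IntertwiningMap.id _) (thetaPowMul_injective p a (b - 1))
      Function.surjective_id
  · obtain ⟨n, t, rfl, rfl, ht⟩ : ∃ n t, a = n + t ∧ b = p - t ∧ t < p :=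
      ⟨a + b - p, p - b, by omega, by omega, by omega⟩
    rw [kf_sub_two_of_le ht, VRep, Nat.cast_add]
    exact isConstituent_of_injective_of_surjective p (thetaPowMul p n (p + t - 1))
      (reductionHom p n ht) (thetaPowMul_injective p n _) (reductionHom_surjective p n ht)

/-- `V_{a,b} = det^a ⊗ Sym^{b-1}` is a Jordan–Hölder constituent of
`Sym^{k'(a,b)-2}`, where `k'(a,b) = a(p+1)+b+1` if `a+b < p` and
`k'(a,b) = (a+1)(p+1)+bp-p²` if `a+b ≥ p`. -/
theorem V_constituent_of_kf (p : ℕ) [Fact p.Prime] (hp : Odd p) (a b : ℕ)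
    (ha : a ≤ p - 2) (hb1 : 1 ≤ b) (hb : b ≤ p) :
    IsConstituent p (VRep p a (b - 1)) (symRep p (kf p a b - 2)) :=
  V_constituent_of_kf_general p a b hb1 hb
end
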